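/- The map X ↦ pad1(format(X)) from binary strings to finite sequences of elements of F_p is injective. -/

import Mathlib

/-!
The leading `1` of a padded block marks where the block starts, so a block `b` is recovered
from the value `2 ^ |b| + val b` by dropping the most significant bit of its binary expansion.
Every padded value is below `2 ^ (n + 1) ≤ 2 ^ (m - 1) < p`, so reduction mod `p` loses nothing,
and the blocks concatenate back to `X`.
-/

/-- The (big-endian) numerical value of a bit string. -/
def blockVal (b : List Bool) : ℕ :=
  b.foldl (fun acc bit => 2 * acc + bit.toNat) 0

/-- The `i`-th (0-based) block of `X` after `pad1`: the block `X_{i+1}` of length `len`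
is padded to `0^{m−len−2}||1||X_{i+1}`, whose value is `2^len + val(X_{i+1})`, in `F_p`. -/
def pad1Block (p n : ℕ) (X : List Bool) (i : ℕ) : ZMod p :=
  ((2 ^ ((X.drop (n * i)).take n).length + blockVal ((X.drop (n * i)).take n) : ℕ) : ZMod p)

@[simp]
lemma blockVal_nil : blockVal [] = 0 := rfl

@[simp]
lemma blockVal_append_singleton (l : List Bool) (b : Bool) :
    blockVal (l ++ [b]) = 2 * blockVal l + b.toNat := by
  simp [blockVal, List.foldl_append]

lemma blockVal_lt_two_pow_length (l : List Bool) : blockVal l < 2 ^ l.length := by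
  induction l using List.reverseRecOn with
  | nil => simp
  | append_singleton l b ih =>
    simp only [blockVal_append_singleton, List.length_append, List.length_singleton, pow_succ]
    have := Bool.toNat_le b
    omega

lemma bits_two_pow_length_add_blockVal (l : List Bool) :
    (2 ^ l.length + blockVal l).bits = l.reverse ++ [true] := by
  induction l using List.reverseRecOn with
  | nil => simp
  | append_singleton l b ih =>
    have hbit : 2 ^ (l ++ [b]).length + blockVal (l ++ [b]) =
        Nat.bit b (2 ^ l.length + blockVal l) := by
      cases b <;> simp [Nat.bit, pow_succ] <;> ring
    rw [hbit, Nat.bits_append_bit _ _ (fun h => absurd h (by positivity)), ih]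
    simp

-- `Nat.bits` is little-endian, so `dropLast` removes the leading `1`.
def unpad (v : ℕ) : List Bool :=
  v.bits.dropLast.reverse

lemma unpad_two_pow_length_add_blockVal (l : List Bool) :
    unpad (2 ^ l.length + blockVal l) = l := by
  simp [unpad, bits_two_pow_length_add_blockVal]

lemma val_pad1Block {p n : ℕ} (hp : 2 ^ (n + 1) ≤ p) (X : List Bool) (i : ℕ) :
    (pad1Block p n X i).val =
      2 ^ ((X.drop (n * i)).take n).length + blockVal ((X.drop (n * i)).take n) := by
  set b := (X.drop (n * i)).take n
  apply ZMod.val_natCast_of_lt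
  calc 2 ^ b.length + blockVal b < 2 ^ b.length + 2 ^ b.length := by
        gcongr; exact blockVal_lt_two_pow_length b
    _ = 2 ^ (b.length + 1) := by ring
    _ ≤ 2 ^ (n + 1) := by gcongr; exacts [one_le_two, List.length_take_le _ _]
    _ ≤ p := hp

lemma List.flatten_map_range_take_drop {α : Type*} (X : List α) (n k : ℕ) :
    ((List.range k).map fun i => (X.drop (n * i)).take n).flatten = X.take (n * k) := by
  induction k with
  | zero => simp
  | succ k ih => simp [List.range_succ, ih, mul_add, List.take_add]

lemma le_mul_add_sub_one_div (L : ℕ) {n : ℕ} (hn : 0 < n) : L ≤ n * ((L + n - 1) / n) := by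
  have := Nat.div_add_mod (L + n - 1) n
  have := Nat.mod_lt (L + n - 1) hn
  omega

theorem pad1_injective_general (p m n : ℕ)
    (hpl : 2 ^ (m - 1) < p) (hn : 0 < n) (hnm : n + 2 ≤ m) :
    Function.Injective (fun X : List Bool =>
      (List.range ((X.length + n - 1) / n)).map (fun i => pad1Block p n X i)) := by
  have hpow : 2 ^ (n + 1) ≤ p :=
    (Nat.pow_le_pow_right two_pos (by omega : n + 1 ≤ m - 1)).trans hpl.le
  refine Function.LeftInverse.injective
    (g := fun l : List (ZMod p) => (l.map fun v => unpad v.val).flatten) fun X => ?_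
  simp only [List.map_map, Function.comp_def, val_pad1Block hpow,
    unpad_two_pow_length_add_blockVal, List.flatten_map_range_take_drop]
  exact List.take_of_length_le (le_mul_add_sub_one_div X.length hn)

/-- The map `X ↦ pad1(format(X))` from binary strings to finite sequences of elements of
`F_p` is injective. -/
theorem pad1_injective (p m n : ℕ) [NeZero p] (hp : p.Prime)
    (hpl : 2 ^ (m - 1) < p) (hpu : p < 2 ^ m) (hn : 0 < n) (hnm : n + 2 ≤ m) :
    Function.Injective (fun X : List Bool =>
      (List.range ((X.length + n - 1) / n)).map (fun i => pad1Block p n X i)) :=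
  pad1_injective_general p m n hpl hn hnm
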